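/- Let α ∈ (0,1) and ε ∈ (0,1). There exists a constant c₁* = c₁*(ε) > 0 such that for all sufficiently large n, P(τ_{n+1} − τ_n + 1 ≥ n^{α/(1−α)+ε}) ≤ 3 e^{−c₁* n^ε}. -/

import Mathlib

/-!
Since `τ_k = Λ⁻¹(S_k)` and `(Λ⁻¹)'(s) = ((1-α) s)^{α/(1-α)}` is increasing, the mean value
theorem gives `τ_{n+1} - τ_n ≤ ((1-α) S_{n+1})^{α/(1-α)} E_n`. Off the event `S_{n+1} ≥ 2n`,
which has probability at most `2^{n+1} e^{-n}` by a Chernoff bound at `t = 1/2`, this is at most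
a constant times `n^{α/(1-α)} E_n`, and `E_n > c n^ε` has probability `e^{-c n^ε}`.
-/

open MeasureTheory ProbabilityTheory Real Filter

/-- The points `τ_k = ((1-α) S_k)^{1/(1-α)}` of the Poisson process with rate `t^{-α}`,
where `S_k = E_0 + ⋯ + E_{k-1}` is a sum of i.i.d. rate-1 exponentials. -/
noncomputable def tauPoly (α : ℝ) {Ω : Type*} (E : ℕ → Ω → ℝ) (k : ℕ) (ω : Ω) : ℝ :=
  ((1 - α) * ∑ i ∈ Finset.range k, E i ω) ^ (1 / (1 - α))

open Set

lemma rpow_sub_rpow_le_mul_sub {p a b : ℝ} (hp : 1 ≤ p) (ha : 0 ≤ a) (hab : a ≤ b) :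
    b ^ p - a ^ p ≤ p * b ^ (p - 1) * (b - a) := by
  rcases hab.eq_or_lt with rfl | hlt
  · simp
  have h := (convexOn_rpow hp).slope_le_of_hasDerivAt (mem_Ici.2 ha) (mem_Ici.2 (ha.trans hab))
    hlt (hasDerivAt_rpow_const (Or.inr hp))
  rw [slope_def_field] at h
  exact (div_le_iff₀ (sub_pos.2 hlt)).1 h

section Exponential

variable {r t : ℝ}

lemma expMeasure_eq_withDensity (r : ℝ) : expMeasure r = volume.withDensity (exponentialPDF r) :=
  rfl

lemma ae_nonneg_expMeasure (r : ℝ) : ∀ᵐ x ∂expMeasure r, 0 ≤ x := by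
  rw [ae_iff, show {x : ℝ | ¬0 ≤ x} = Iio 0 by ext; simp, expMeasure_eq_withDensity,
    withDensity_apply _ measurableSet_Iio]
  exact lintegral_exponentialPDF_of_nonpos le_rfl

lemma expMeasure_Ioi (hr : 0 < r) {x : ℝ} (hx : 0 ≤ x) :
    expMeasure r (Ioi x) = ENNReal.ofReal (exp (-(r * x))) := by
  have := isProbabilityMeasure_expMeasure hr
  rw [← ofReal_measureReal, ← compl_Iic, probReal_compl_eq_one_sub measurableSet_Iic,
    ← cdf_eq_real, cdf_expMeasure_eq hr, if_pos hx, sub_sub_cancel]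

lemma lintegral_exp_mul_expMeasure (hr : 0 < r) (ht : t < r) :
    ∫⁻ x, ENNReal.ofReal (exp (t * x)) ∂expMeasure r = ENNReal.ofReal (r / (r - t)) := by
  have hdensity : ∀ x, exponentialPDF r x * ENNReal.ofReal (exp (t * x))
      = (Ici 0).indicator (fun y => ENNReal.ofReal (r * exp ((t - r) * y))) x := by
    intro x
    by_cases hx : 0 ≤ x
    · rw [indicator_of_mem (mem_Ici.2 hx), exponentialPDF_of_nonneg hx,
        ← ENNReal.ofReal_mul (by positivity), mul_assoc, ← exp_add]
      ring_nf
    · rw [indicator_of_notMem (by simpa using hx), exponentialPDF_of_neg (not_le.1 hx), zero_mul]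
  rw [expMeasure_eq_withDensity, lintegral_withDensity_eq_lintegral_mul _
      (show Measurable (exponentialPDF r) from (measurable_exponentialPDFReal r).ennreal_ofReal)
      (by fun_prop)]
  simp only [Pi.mul_apply, hdensity, lintegral_indicator measurableSet_Ici,
    ← restrict_Ioi_eq_restrict_Ici]
  rw [← ofReal_integral_eq_lintegral_ofReal
      ((integrableOn_exp_mul_Ioi (by linarith) 0).const_mul r)
      (ae_of_all _ fun _ => by positivity),
    integral_const_mul, integral_exp_mul_Ioi (by linarith)]
  have : r - t ≠ 0 := by linarith
  rw [mul_zero, exp_zero, ← neg_sub r t]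
  field_simp

lemma integrable_exp_mul_expMeasure (hr : 0 < r) (ht : t < r) :
    Integrable (fun x => exp (t * x)) (expMeasure r) :=
  ⟨by fun_prop, by
    rw [hasFiniteIntegral_iff_ofReal (ae_of_all _ fun _ => (exp_pos _).le),
      lintegral_exp_mul_expMeasure hr ht]
    exact ENNReal.ofReal_lt_top⟩

lemma mgf_id_expMeasure (hr : 0 < r) (ht : t < r) : mgf id (expMeasure r) t = r / (r - t) := by
  rw [mgf, integral_eq_lintegral_of_nonneg_ae (ae_of_all _ fun _ => (exp_pos _).le) (by fun_prop)]
  simp only [id]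
  rw [lintegral_exp_mul_expMeasure hr ht, ENNReal.toReal_ofReal (div_nonneg hr.le (by linarith))]

variable {Ω ι : Type*} [MeasurableSpace Ω] {μ : Measure Ω}

lemma measure_lt_of_map_eq_expMeasure {X : Ω → ℝ} (hX : Measurable X)
    (hlaw : μ.map X = expMeasure r) (hr : 0 < r) {x : ℝ} (hx : 0 ≤ x) :
    μ {ω | x < X ω} = ENNReal.ofReal (exp (-(r * x))) := by
  rw [← expMeasure_Ioi hr hx, ← hlaw, Measure.map_apply hX measurableSet_Ioi]
  rfl

lemma measureReal_le_sum_le_of_map_eq_expMeasure [IsFiniteMeasure μ] {X : ι → Ω → ℝ}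
    (hmeas : ∀ i, Measurable (X i)) (hindep : iIndepFun X μ)
    (hlaw : ∀ i, μ.map (X i) = expMeasure r) (hr : 0 < r) (ht0 : 0 ≤ t) (htr : t < r)
    (s : Finset ι) (a : ℝ) :
    μ.real {ω | a ≤ ∑ i ∈ s, X i ω} ≤ exp (-t * a) * (r / (r - t)) ^ s.card := by
  have hint : ∀ i ∈ s, Integrable (fun ω => exp (t * X i ω)) μ := fun i _ => by
    have h := integrable_exp_mul_expMeasure hr htr
    rw [← hlaw i] at h
    exact (integrable_map_measure (by fun_prop) (hmeas i).aemeasurable).1 h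
  have hmgf : ∀ i, mgf (X i) μ t = r / (r - t) := fun i => by
    rw [← mgf_id_map (hmeas i).aemeasurable, hlaw i, mgf_id_expMeasure hr htr]
  have h := measure_ge_le_exp_mul_mgf a ht0 (hindep.integrable_exp_mul_sum hmeas hint)
  rw [hindep.mgf_sum hmeas, Finset.prod_congr rfl fun i _ => hmgf i, Finset.prod_const] at h
  simpa [Finset.sum_apply] using h

lemma measureReal_two_mul_le_sum_range_le [IsFiniteMeasure μ] {X : ℕ → Ω → ℝ}
    (hmeas : ∀ i, Measurable (X i)) (hindep : iIndepFun X μ)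
    (hlaw : ∀ i, μ.map (X i) = expMeasure 1) (n : ℕ) :
    μ.real {ω | 2 * (n : ℝ) ≤ ∑ i ∈ Finset.range (n + 1), X i ω} ≤ 2 * exp (-(1 - log 2) * n) := by
  refine (measureReal_le_sum_le_of_map_eq_expMeasure hmeas hindep hlaw one_pos
    (t := 1 / 2) (by norm_num) (by norm_num) _ _).trans_eq ?_
  rw [Finset.card_range, show (1 : ℝ) / (1 - 1 / 2) = exp (log 2) by norm_num [exp_log],
    ← exp_nat_mul, ← exp_add,
    show -(1 / 2) * (2 * (n : ℝ)) + ↑(n + 1) * log 2 = log 2 + -(1 - log 2) * n by push_cast; ring,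
    exp_add, exp_log two_pos]

end Exponential

section PoissonPoints

variable {α : ℝ} {Ω : Type*} {E : ℕ → Ω → ℝ} {n : ℕ} {ω : Ω}

lemma tauPoly_succ_sub_le (hα0 : 0 ≤ α) (hα1 : α < 1) (hE : ∀ i ≤ n, 0 ≤ E i ω) :
    tauPoly α E (n + 1) ω - tauPoly α E n ω
      ≤ ((1 - α) * ∑ i ∈ Finset.range (n + 1), E i ω) ^ (α / (1 - α)) * E n ω := by
  have h1α : 0 < 1 - α := by linarith
  have hp : 1 ≤ 1 / (1 - α) := by rw [le_div_iff₀ h1α]; linarith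
  have hS : 0 ≤ ∑ i ∈ Finset.range n, E i ω :=
    Finset.sum_nonneg fun i hi => hE i (Finset.mem_range.1 hi).le
  have hstep : (1 - α) * ∑ i ∈ Finset.range n, E i ω
      ≤ (1 - α) * ∑ i ∈ Finset.range (n + 1), E i ω := by
    rw [Finset.sum_range_succ]
    nlinarith [hE n le_rfl]
  calc tauPoly α E (n + 1) ω - tauPoly α E n ω
      ≤ 1 / (1 - α) * ((1 - α) * ∑ i ∈ Finset.range (n + 1), E i ω) ^ (1 / (1 - α) - 1)
          * ((1 - α) * ∑ i ∈ Finset.range (n + 1), E i ω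
            - (1 - α) * ∑ i ∈ Finset.range n, E i ω) :=
        rpow_sub_rpow_le_mul_sub hp (mul_nonneg h1α.le hS) hstep
    _ = _ := by
        rw [Finset.sum_range_succ, show 1 / (1 - α) - 1 = α / (1 - α) by field_simp; ring]
        field_simp
        ring

lemma tauPoly_succ_sub_add_one_lt {ε c : ℝ} (hα0 : 0 ≤ α) (hα1 : α < 1)
    (hc : (2 * (1 - α)) ^ (α / (1 - α)) * c ≤ 1 / 2) (hn1 : 1 ≤ (n : ℝ)) (hn : 2 < (n : ℝ) ^ ε)
    (hE : ∀ i ≤ n, 0 ≤ E i ω) (hS : ∑ i ∈ Finset.range (n + 1), E i ω < 2 * n)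
    (hEn : E n ω ≤ c * (n : ℝ) ^ ε) :
    tauPoly α E (n + 1) ω - tauPoly α E n ω + 1 < (n : ℝ) ^ (α / (1 - α) + ε) := by
  have h1α : 0 < 1 - α := by linarith
  have hθ : 0 ≤ α / (1 - α) := div_nonneg hα0 h1α.le
  have hS0 : 0 ≤ ∑ i ∈ Finset.range (n + 1), E i ω :=
    Finset.sum_nonneg fun i hi => hE i (Nat.lt_succ_iff.1 (Finset.mem_range.1 hi))
  have hnθ : (n : ℝ) ^ ε ≤ (n : ℝ) ^ (α / (1 - α) + ε) :=
    rpow_le_rpow_of_exponent_le hn1 (by linarith)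
  calc tauPoly α E (n + 1) ω - tauPoly α E n ω + 1
      ≤ ((1 - α) * ∑ i ∈ Finset.range (n + 1), E i ω) ^ (α / (1 - α)) * E n ω + 1 := by
        linarith [tauPoly_succ_sub_le hα0 hα1 hE]
    _ ≤ ((1 - α) * (2 * n)) ^ (α / (1 - α)) * (c * (n : ℝ) ^ ε) + 1 := by
        gcongr
        exact hE n le_rfl
    _ = (2 * (1 - α)) ^ (α / (1 - α)) * c * (n : ℝ) ^ (α / (1 - α) + ε) + 1 := by
        rw [show (1 - α) * (2 * n) = 2 * (1 - α) * n by ring, mul_rpow (by linarith) (by linarith),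
          rpow_add (by linarith)]
        ring
    _ ≤ 1 / 2 * (n : ℝ) ^ (α / (1 - α) + ε) + 1 := by gcongr
    _ < (n : ℝ) ^ (α / (1 - α) + ε) := by linarith

end PoissonPoints

section Gap

variable {Ω : Type*} [MeasurableSpace Ω] {μ : Measure Ω} [IsProbabilityMeasure μ]
  {E : ℕ → Ω → ℝ}

lemma measure_tauPoly_gap_le (hEmeas : ∀ k, Measurable (E k)) (hEindep : iIndepFun E μ)
    (hEdist : ∀ k, μ.map (E k) = expMeasure 1) {α ε c : ℝ} (hα0 : 0 ≤ α) (hα1 : α < 1)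
    (hε1 : ε ≤ 1) (hc0 : 0 ≤ c) (hc : (2 * (1 - α)) ^ (α / (1 - α)) * c ≤ 1 / 2)
    (hc' : c ≤ 1 - log 2) {n : ℕ} (hn1 : 1 ≤ (n : ℝ)) (hn : 2 < (n : ℝ) ^ ε) :
    μ {ω | (n : ℝ) ^ (α / (1 - α) + ε) ≤ tauPoly α E (n + 1) ω - tauPoly α E n ω + 1}
      ≤ ENNReal.ofReal (3 * exp (-c * (n : ℝ) ^ ε)) := by
  have hE : ∀ᵐ ω ∂μ, ∀ i, 0 ≤ E i ω := ae_all_iff.2 fun i =>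
    ae_of_ae_map (hEmeas i).aemeasurable ((hEdist i).symm ▸ ae_nonneg_expMeasure 1)
  have hcover : {ω | (n : ℝ) ^ (α / (1 - α) + ε) ≤ tauPoly α E (n + 1) ω - tauPoly α E n ω + 1}
      ≤ᵐ[μ] ({ω | 2 * (n : ℝ) ≤ ∑ i ∈ Finset.range (n + 1), E i ω}
        ∪ {ω | c * (n : ℝ) ^ ε < E n ω} : Set Ω) := by
    filter_upwards [hE] with ω hω hbad
    by_contra hgood
    obtain ⟨hS, hEn⟩ := not_or.1 hgood
    exact (tauPoly_succ_sub_add_one_lt hα0 hα1 hc hn1 hn (fun i _ => hω i) (lt_of_not_ge hS)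
      (le_of_not_gt hEn)).not_ge hbad
  have hsum : μ {ω | 2 * (n : ℝ) ≤ ∑ i ∈ Finset.range (n + 1), E i ω}
      ≤ ENNReal.ofReal (2 * exp (-c * (n : ℝ) ^ ε)) := by
    have hnε : (n : ℝ) ^ ε ≤ n := by simpa using rpow_le_rpow_of_exponent_le hn1 hε1
    rw [ENNReal.le_ofReal_iff_toReal_le (measure_ne_top _ _) (by positivity)]
    refine (measureReal_two_mul_le_sum_range_le hEmeas hEindep hEdist n).trans ?_
    gcongr 2 * exp ?_
    nlinarith [log_two_lt_d9]
  have htail : μ {ω | c * (n : ℝ) ^ ε < E n ω} = ENNReal.ofReal (exp (-c * (n : ℝ) ^ ε)) := by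
    rw [measure_lt_of_map_eq_expMeasure (hEmeas n) (hEdist n) one_pos (by positivity), one_mul,
      neg_mul]
  calc _ ≤ μ ({ω | 2 * (n : ℝ) ≤ ∑ i ∈ Finset.range (n + 1), E i ω}
          ∪ {ω | c * (n : ℝ) ^ ε < E n ω}) := measure_mono_ae hcover
    _ ≤ ENNReal.ofReal (2 * exp (-c * (n : ℝ) ^ ε)) + ENNReal.ofReal (exp (-c * (n : ℝ) ^ ε)) :=
        (measure_union_le _ _).trans (add_le_add hsum htail.le)
    _ = ENNReal.ofReal (3 * exp (-c * (n : ℝ) ^ ε)) := by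
        rw [← ENNReal.ofReal_add (by positivity) (by positivity)]
        ring_nf

end Gap

theorem stmt6 {Ω : Type*} [MeasurableSpace Ω] (μ : Measure Ω) [IsProbabilityMeasure μ]
    (α : ℝ) (hα : α ∈ Set.Ioo (0:ℝ) 1) (ε : ℝ) (hε : ε ∈ Set.Ioo (0:ℝ) 1)
    (E : ℕ → Ω → ℝ) (hEmeas : ∀ k, Measurable (E k))
    (hEindep : iIndepFun E μ)
    (hEdist : ∀ k, Measure.map (E k) μ = expMeasure 1) :
    ∃ c > (0:ℝ), ∀ᶠ n : ℕ in atTop,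
      μ {ω | (n : ℝ) ^ (α / (1 - α) + ε)
              ≤ tauPoly α E (n + 1) ω - tauPoly α E n ω + 1}
        ≤ ENNReal.ofReal (3 * Real.exp (-c * (n : ℝ) ^ ε)) := by
  obtain ⟨hα0, hα1⟩ := hα
  obtain ⟨hε0, hε1⟩ := hε
  set K := (2 * (1 - α)) ^ (α / (1 - α))
  have hK : 0 < K := rpow_pos_of_pos (by linarith) _
  set c := min (1 / (2 * K)) (1 - log 2)
  have hc : 0 < c := lt_min (by positivity) (by linarith [log_two_lt_d9])
  have hKc : K * c ≤ 1 / 2 :=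
    (mul_le_mul_of_nonneg_left (min_le_left _ _) hK.le).trans_eq (by field_simp)
  refine ⟨c, hc, ?_⟩
  filter_upwards [((tendsto_rpow_atTop hε0).comp tendsto_natCast_atTop_atTop).eventually_gt_atTop 2,
    eventually_ge_atTop 1] with n hn2 hn1
  exact measure_tauPoly_gap_le hEmeas hEindep hEdist hα0.le hα1 hε1.le hc.le hKc
    (min_le_right _ _) (by exact_mod_cast hn1) hn2
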